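/- Let S and P be linear subspaces of a finite-dimensional real inner product space E and let u ∈ P. Then ‖π_{S^⊥} u‖² − ‖π_{P^⊥}(π_S u)‖² = ‖(π_P − π_S)² u‖². -/

import Mathlib

/-- The orthogonal projection of `E` onto the subspace `V`, as a map `E → E`. -/
noncomputable def proj {E : Type*} [NormedAddCommGroup E] [InnerProductSpace ℝ E]
    (V : Submodule ℝ E) [V.HasOrthogonalProjection] : E →L[ℝ] E :=
  V.subtypeL.comp (V.orthogonalProjectionOnto)

/-!
For `u ∈ P` one has `(π_P − π_S)² u = u − π_P π_S u`, a vector of `P`, and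
`π_{Sᗮ} u = u − π_S u = (u − π_P π_S u) − π_{Pᗮ} π_S u` splits it orthogonally; Pythagoras
gives the identity.
-/

theorem proj_eq_starProjection {E : Type*} [NormedAddCommGroup E] [InnerProductSpace ℝ E]
    (V : Submodule ℝ E) [V.HasOrthogonalProjection] : proj V = V.starProjection :=
  rfl

namespace Submodule

theorem sub_starProjection_sq_apply_of_mem {𝕜 E : Type*} [RCLike 𝕜] [NormedAddCommGroup E]
    [InnerProductSpace 𝕜 E] (S P : Submodule 𝕜 E) [S.HasOrthogonalProjection]
    [P.HasOrthogonalProjection] {u : E} (hu : u ∈ P) :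
    (P.starProjection - S.starProjection) ((P.starProjection - S.starProjection) u) =
      u - P.starProjection (S.starProjection u) := by
  have hPu : P.starProjection u = u := P.starProjection_eq_self_iff.2 hu
  have hSS : S.starProjection (S.starProjection u) = S.starProjection u :=
    S.starProjection_eq_self_iff.2 (S.starProjection_apply_mem u)
  simp only [sub_apply, map_sub, hPu, hSS]
  abel

theorem norm_sub_sq_eq_of_mem {E : Type*} [NormedAddCommGroup E] [InnerProductSpace ℝ E]
    (K : Submodule ℝ E) [K.HasOrthogonalProjection] {u : E} (hu : u ∈ K) (q : E) :
    ‖u - q‖ ^ 2 = ‖u - K.starProjection q‖ ^ 2 + ‖Kᗮ.starProjection q‖ ^ 2 := by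
  have hsplit : u - q = (u - K.starProjection q) - Kᗮ.starProjection q := by
    rw [K.starProjection_orthogonal_val]
    abel
  have horth : inner ℝ (u - K.starProjection q) (Kᗮ.starProjection q) = 0 :=
    Kᗮ.starProjection_apply_mem q _ (K.sub_mem hu (K.starProjection_apply_mem q))
  rw [hsplit, norm_sub_sq_real, horth]
  ring

end Submodule

/-- If `S` and `P` are linear subspaces of a finite-dimensional real inner product space `E`
and `u ∈ P`, then `‖π_{S^⊥} u‖² − ‖π_{P^⊥}(π_S u)‖² = ‖(π_P − π_S)² u‖²`. -/
theorem stmt5 {E : Type*} [NormedAddCommGroup E] [InnerProductSpace ℝ E]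
    [FiniteDimensional ℝ E] (S P : Submodule ℝ E) (u : E) (hu : u ∈ P) :
    ‖proj Sᗮ u‖ ^ 2 - ‖proj Pᗮ (proj S u)‖ ^ 2 =
      ‖(proj P - proj S) ((proj P - proj S) u)‖ ^ 2 := by
  simp only [proj_eq_starProjection]
  rw [S.starProjection_orthogonal_val, P.norm_sub_sq_eq_of_mem hu,
    Submodule.sub_starProjection_sq_apply_of_mem S P hu]
  ring
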